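/- arXiv:math/0702108 — 3 statements merged into one kernel-verified Lean document; each statement's English description precedes it below -/
import Mathlib

section
/- Let A be a commutative unital C*-algebra and let E be a Hilbert C*-module over A possessing an orthonormal basis. Suppose Φ : L(E) → L(E) satisfies Φ(T) = ATB for all T ∈ L(E), where A ∈ L(E) is injective and B = C* for an injective adjointable map C. If Φ is surjective, then A and B are invertible in L(E). -/
/-! The identity `A T C* = 1` obtained from surjectivity makes `A` right invertible, hence
invertible since it is injective. Taking adjoints gives `C (T* A*) = 1`, so `C` is invertible
in the same way, and then so is `B = C*`, with inverse `(T* A*)* = A T`. -/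

/-- A (left) Hilbert C*-module structure on `E` over the C*-algebra `A`:
an `A`-valued inner product, `A`-linear in the first variable and conjugate
`A`-linear in the second, positive and definite, compatible with the norm of `E`,
for which `E` is complete. -/
structure HilbertModule (A : Type*) (E : Type*) [CStarAlgebra A]
    [NormedAddCommGroup E] [Module A E] where
  inner : E → E → A
  inner_add_left : ∀ x y z : E, inner (x + y) z = inner x z + inner y z
  inner_smul_left : ∀ (a : A) (x y : E), inner (a • x) y = a * inner x y
  inner_conj_symm : ∀ x y : E, inner y x = star (inner x y)
  inner_self_pos : ∀ x : E, ∃ c : A, inner x x = star c * c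
  inner_self_eq_zero : ∀ x : E, inner x x = 0 → x = 0
  norm_sq_eq : ∀ x : E, ‖x‖ ^ 2 = ‖inner x x‖
  complete : CompleteSpace E

namespace HilbertModule

variable {A E : Type*} [CStarAlgebra A] [NormedAddCommGroup E] [Module A E]
variable (M : HilbertModule A E)

/-- The "rank-one" module map `θ_{x,y} : ξ ↦ ⟨ξ,y⟩x`. -/
def theta (x y : E) : E → E := fun ξ => M.inner ξ y • x

/-- `e : ι → E` is an orthonormal basis: `⟨e i, e j⟩ = δ_{ij}` and every `x`
is the norm-convergent sum `Σ_i ⟨x, e i⟩ • e i`. -/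
structure IsONB {ι : Type*} (e : ι → E) : Prop where
  ortho_self : ∀ i : ι, M.inner (e i) (e i) = 1
  ortho_ne : ∀ i j : ι, i ≠ j → M.inner (e i) (e j) = 0
  total : ∀ x : E, HasSum (fun i => M.inner x (e i) • e i) x

/-- The coordinately invertible elements with respect to the orthonormal basis `e`:
nonzero elements all of whose coordinates are zero or invertible. -/
def CI {ι : Type*} (e : ι → E) : Set E :=
  {x | x ≠ 0 ∧ ∀ i : ι, M.inner (e i) x = 0 ∨ IsUnit (M.inner (e i) x)}

/-- `F(E)`: the `A`-linear span of the rank-one module maps `θ_{x,y}`. -/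
def F : Submodule A (E → E) :=
  Submodule.span A {T : E → E | ∃ x y : E, T = M.theta x y}

theorem theta_mem_F (x y : E) : M.theta x y ∈ M.F :=
  Submodule.subset_span ⟨x, y, rfl⟩

/-- `θ_{x,y}` as an element of `F(E)`. -/
def thetaF (x y : E) : M.F := ⟨M.theta x y, M.theta_mem_F x y⟩

/-- A map `T : E → E` is `A`-linear if it is additive and `A`-homogeneous. -/
def IsALinear (T : E → E) : Prop :=
  (∀ x y : E, T (x + y) = T x + T y) ∧ ∀ (a : A) (x : E), T (a • x) = a • T x

/-- A map `T : E → E` is conjugate `A`-linear if it is additive and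
`T (a • x) = star a • T x`. -/
def IsConjLinear (T : E → E) : Prop :=
  (∀ x y : E, T (x + y) = T x + T y) ∧ ∀ (a : A) (x : E), T (a • x) = star a • T x

/-- An `A`-linear map `Φ : F(E) → F(E)` is rank decreasing if it sends each `θ_{x,y₀}`
with `y₀ ∈ CI` to some `θ_{s,t₀}` with `t₀ ∈ CI`. -/
def RankDecreasing {ι : Type*} (e : ι → E) (Φ : M.F →ₗ[A] M.F) : Prop :=
  ∀ x : E, ∀ y₀ ∈ M.CI e, ∃ s : E, ∃ t₀ ∈ M.CI e,
    (Φ (M.thetaF x y₀) : E → E) = M.theta s t₀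

/-- An `A`-linear map `Φ : F(E) → F(E)` is rank-1 preserving if it is rank decreasing
and moreover `s ≠ 0` whenever `x ≠ 0`. -/
def Rank1Preserving {ι : Type*} (e : ι → E) (Φ : M.F →ₗ[A] M.F) : Prop :=
  ∀ x : E, ∀ y₀ ∈ M.CI e, ∃ s : E, ∃ t₀ ∈ M.CI e,
    (Φ (M.thetaF x y₀) : E → E) = M.theta s t₀ ∧ (x ≠ 0 → s ≠ 0)

end HilbertModule

namespace HilbertModule

variable {A E : Type*} [CStarAlgebra A] [NormedAddCommGroup E] [Module A E]
variable (M : HilbertModule A E)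

theorem inner_smul_right (a : A) (x y : E) :
    M.inner x (a • y) = M.inner x y * star a := by
  rw [M.inner_conj_symm (a • y) x, M.inner_smul_left, star_mul,
    ← M.inner_conj_symm y x]

/-- `L(E)`: the adjointable operators on `E`, represented as pairs `(T, T*)` with
`⟨T x, y⟩ = ⟨x, T* y⟩`.  The subtype topology induced from pointwise convergence of the
pair `(T, T*)` (i.e. by the seminorms `T ↦ ‖T x‖` and `T ↦ ‖T* x‖`) is the strict topology. -/
abbrev L : Type _ :=
  {p : (E → E) × (E → E) // ∀ x y : E, M.inner (p.1 x) y = M.inner x (p.2 y)}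

theorem theta_adjoint (x y : E) (ξ η : E) :
    M.inner (M.theta x y ξ) η = M.inner ξ (M.theta y x η) := by
  show M.inner (M.inner ξ y • x) η = M.inner ξ (M.inner η x • y)
  rw [M.inner_smul_left, M.inner_smul_right, ← M.inner_conj_symm η x]

/-- `θ_{x,y}` as an element of `L(E)`; its adjoint is `θ_{y,x}`. -/
def thetaL (x y : E) : M.L :=
  ⟨(M.theta x y, M.theta y x), M.theta_adjoint x y⟩

/-- A conjugate `A`-linear map `T : E → E` is adjointable if there is a conjugate
`A`-linear `S` with `⟨T x, y⟩ = ⟨S y, x⟩` for all `x, y`. -/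
def ConjAdjointable (T : E → E) : Prop :=
  IsConjLinear (A := A) T ∧ ∃ S : E → E, IsConjLinear (A := A) S ∧
    ∀ x y : E, M.inner (T x) y = M.inner (S y) x

end HilbertModule

namespace HilbertModule

variable {A E : Type*} [CStarAlgebra A] [NormedAddCommGroup E] [Module A E]
variable (M : HilbertModule A E)

theorem inner_sub_left (u v x : E) : M.inner (u - v) x = M.inner u x - M.inner v x :=
  (AddMonoidHom.mk' (M.inner · x) fun u v => M.inner_add_left u v x).map_sub u v

theorem ext_inner_left {u v : E} (h : ∀ x : E, M.inner x u = M.inner x v) : u = v := by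
  have h' : ∀ x : E, M.inner u x = M.inner v x := fun x => by
    rw [M.inner_conj_symm x u, M.inner_conj_symm x v, h x]
  refine sub_eq_zero.mp (M.inner_self_eq_zero _ ?_)
  rw [M.inner_sub_left, h', sub_self]

variable {M}

theorem L.adjoint_inner_left (P : M.L) (x y : E) :
    M.inner (P.1.2 x) y = M.inner x (P.1.1 y) := by
  rw [M.inner_conj_symm y, ← P.2, ← M.inner_conj_symm]

def L.comp (S T : M.L) : M.L :=
  ⟨(S.1.1 ∘ T.1.1, T.1.2 ∘ S.1.2), fun _ _ => (S.2 _ _).trans (T.2 _ _)⟩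

def L.adjoint (T : M.L) : M.L :=
  ⟨(T.1.2, T.1.1), fun x y => T.adjoint_inner_left x y⟩

theorem L.rightInverse_adjoint {P Q : M.L} (h : Function.LeftInverse P.1.1 Q.1.1) :
    Function.RightInverse P.1.2 Q.1.2 := fun ξ =>
  M.ext_inner_left fun x => by
    rw [← Q.2, ← P.2, h]

end HilbertModule

theorem surjective_form_invertible_general {A E : Type*} [CommCStarAlgebra A]
    [NormedAddCommGroup E] [Module A E]
    (M : HilbertModule A E)
    (A₀ C₀ : M.L) (hA : Function.Injective A₀.1.1) (hC : Function.Injective C₀.1.1)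
    (Φ : M.L → M.L)
    (hΦ : ∀ T : M.L, (Φ T).1.1 = fun ξ => A₀.1.1 (T.1.1 (C₀.1.2 ξ)))
    (hsurj : Function.Surjective Φ) :
    (∃ A' : M.L, A₀.1.1 ∘ A'.1.1 = id ∧ A'.1.1 ∘ A₀.1.1 = id) ∧
    (∃ B' : M.L, C₀.1.2 ∘ B'.1.1 = id ∧ B'.1.1 ∘ C₀.1.2 = id) := by
  obtain ⟨T, hT⟩ := hsurj ⟨(id, id), fun _ _ => rfl⟩
  set A' := T.comp C₀.adjoint
  have hA' : Function.LeftInverse A₀.1.1 A'.1.1 := fun ξ => by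
    have h := congrFun (hΦ T) ξ
    rw [hT] at h
    exact h.symm
  set C' := (A₀.comp T).adjoint
  have hC' : Function.LeftInverse C₀.1.1 C'.1.1 :=
    HilbertModule.L.rightInverse_adjoint hA'
  refine ⟨⟨A', hA'.comp_eq_id, (hA'.rightInverse_of_injective hA).comp_eq_id⟩,
    ⟨C'.adjoint, (HilbertModule.L.rightInverse_adjoint
      (hC'.rightInverse_of_injective hC)).comp_eq_id,
      (HilbertModule.L.rightInverse_adjoint hC').comp_eq_id⟩⟩

/-- if `Φ : L(E) → L(E)` has the form `Φ(T) = A T B` where `A ∈ L(E)` is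
injective and `B = C*` for an injective adjointable `C`, and `Φ` is surjective, then `A`
and `B` are invertible in `L(E)`. -/
theorem surjective_form_invertible {A E ι : Type*} [CommCStarAlgebra A]
    [NormedAddCommGroup E] [Module A E]
    (M : HilbertModule A E) (e : ι → E) (he : M.IsONB e)
    (A₀ C₀ : M.L) (hA : Function.Injective A₀.1.1) (hC : Function.Injective C₀.1.1)
    (Φ : M.L → M.L)
    (hΦ : ∀ T : M.L, (Φ T).1.1 = fun ξ => A₀.1.1 (T.1.1 (C₀.1.2 ξ)))
    (hsurj : Function.Surjective Φ) :
    (∃ A' : M.L, A₀.1.1 ∘ A'.1.1 = id ∧ A'.1.1 ∘ A₀.1.1 = id) ∧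
    (∃ B' : M.L, C₀.1.2 ∘ B'.1.1 = id ∧ B'.1.1 ∘ C₀.1.2 = id) :=
  surjective_form_invertible_general M A₀ C₀ hA hC Φ hΦ hsurj
end

section
/- Let A be a commutative unital C*-algebra and let E be a Hilbert C*-module over A possessing an orthonormal basis. Let T : E → E be an injective A-linear map and suppose there exist x₁, x₂ ∈ E such that Tx₁ ≠ α Tx₂ for all α ∈ A and Tx₂ ≠ β Tx₁ for all β ∈ A. Let B : E → E be an A-linear map such that for every x ∈ E there exists λ_x ∈ A with Bx = λ_x Tx. Then there exists λ ∈ A such that Bx = λ Tx for all x ∈ E. -/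
/-- over a commutative unital C*-algebra, if `T` is an injective `A`-linear map
with two values that are not `A`-multiples of each other, and `B` is an `A`-linear map with
`B x = λ_x • T x` pointwise, then `B = λ • T` for a single `λ ∈ A`. -/
theorem exists_global_scalar {A E ι : Type*} [CommCStarAlgebra A]
    [NormedAddCommGroup E] [Module A E]
    (M : HilbertModule A E) (e : ι → E) (he : M.IsONB e)
    (T B : E → E)
    (hT : HilbertModule.IsALinear (A := A) T) (hTinj : Function.Injective T)
    (hsep : ∃ x₁ x₂ : E, (∀ α : A, T x₁ ≠ α • T x₂) ∧ (∀ β : A, T x₂ ≠ β • T x₁))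
    (hB : HilbertModule.IsALinear (A := A) B)
    (hpt : ∀ x : E, ∃ l : A, B x = l • T x) :
    ∃ l : A, ∀ x : E, B x = l • T x := by
  classical
  obtain hι | hne := isEmpty_or_nonempty ι
  · refine ⟨0, fun x => ?_⟩
    have hzero : ∀ y : E, y = 0 := fun y => (he.total y).unique hasSum_empty
    rw [hzero (B x), hzero ((0 : A) • T x)]
  · obtain ⟨i₀⟩ := hne
    obtain ⟨l₁, hl₁⟩ := hpt (e i₀)
    refine ⟨l₁, fun x => ?_⟩
    obtain ⟨lx, hlx⟩ := hpt x
    -- auxiliary facts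
    have coords_zero : ∀ y : E, (∀ i, M.inner y (e i) = 0) → y = 0 := by
      intro y hy
      refine (he.total y).unique ?_
      convert hasSum_zero with i
      rw [hy i, zero_smul]
    have inner_zero_left : ∀ y : E, M.inner 0 y = 0 := by
      intro y
      have h := M.inner_add_left 0 0 y
      rw [add_zero] at h
      have h2 : M.inner 0 y + 0 = M.inner 0 y + M.inner 0 y := by rw [add_zero]; exact h
      exact (add_left_cancel h2).symm
    have inner_sub_left : ∀ u v w : E, M.inner (u - v) w = M.inner u w - M.inner v w := by
      intro u v w
      have h := M.inner_add_left (u - v) v w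
      rw [sub_add_cancel] at h
      exact eq_sub_of_add_eq h.symm
    have hT0 : T 0 = 0 := by
      have h := hT.2 0 0
      rwa [zero_smul, zero_smul] at h
    -- key pointwise identity
    have key : ∀ i j : ι,
        (l₁ - lx) * M.inner (T x) (e i) * M.inner (T (e i₀)) (e j) = 0 := by
      intro i j
      suffices hchar : ∀ ψ : WeakDual.characterSpace ℂ A,
          ψ ((l₁ - lx) * M.inner (T x) (e i) * M.inner (T (e i₀)) (e j)) = 0 by
        apply (gelfandTransform_isometry A).injective
        rw [map_zero]
        ext ψ
        simpa using hchar ψ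
      intro ψ
      set u : ι → ℂ := fun k => ψ (M.inner (T x) (e k)) with hu
      set v : ι → ℂ := fun k => ψ (M.inner (T (e i₀)) (e k)) with hv
      have hgoal : ψ ((l₁ - lx) * M.inner (T x) (e i) * M.inner (T (e i₀)) (e j))
          = (ψ l₁ - ψ lx) * u i * v j := by
        rw [map_mul, map_mul, map_sub]
      rw [hgoal]
      rcases eq_or_ne (u i) 0 with h | hui
      · rw [h]; ring
      rcases eq_or_ne (v j) 0 with h | hvj
      · rw [h]; ring
      -- the eigenvalue relation for x + z • e i₀
      have eig : ∀ z : ℂ, ∃ t : ℂ, ∀ k,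
          ψ lx * u k + z * (ψ l₁ * v k) = t * (u k + z * v k) := by
        intro z
        obtain ⟨ν, hν⟩ := hpt (x + algebraMap ℂ A z • e i₀)
        refine ⟨ψ ν, fun k => ?_⟩
        have h2 : lx • T x + algebraMap ℂ A z • (l₁ • T (e i₀))
            = ν • (T x + algebraMap ℂ A z • T (e i₀)) := by
          rw [← hlx, ← hl₁, ← hB.2, ← hB.1, hν, hT.1, hT.2]
        have h3 := congrArg (fun y => M.inner y (e k)) h2
        simp only [M.inner_add_left, M.inner_smul_left] at h3
        have h4 := congrArg ψ h3
        simp only [map_add, map_mul] at h4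
        have hz : ψ (algebraMap ℂ A z) = z := by simpa using AlgHomClass.commutes ψ z
        rw [hz] at h4
        exact h4
      obtain ⟨t, ht⟩ := eig 1
      rcases eq_or_ne t (ψ lx) with hteq | htne
      · have hj := ht j
        rw [hteq] at hj
        have hj2 : ψ l₁ * v j = ψ lx * v j := by linear_combination hj
        have hl : ψ l₁ = ψ lx := mul_right_cancel₀ hvj hj2
        rw [hl]; ring
      · have hsub : ψ lx - t ≠ 0 := sub_ne_zero.mpr (Ne.symm htne)
        set w : ℂ := (t - ψ l₁) / (ψ lx - t) with hw
        have hdep : ∀ k, u k = w * v k := by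
          intro k
          have e1 : (ψ lx - t) * u k = (t - ψ l₁) * v k := by linear_combination ht k
          rw [hw]
          field_simp
          linear_combination e1
        have hwne : w ≠ 0 := by
          intro h0
          exact hui (by rw [hdep i, h0, zero_mul])
        obtain ⟨t', ht'⟩ := eig (-w)
        have h2 := ht' j
        rw [hdep j] at h2
        have h3 : (ψ lx - ψ l₁) * (w * v j) = 0 := by linear_combination h2
        have h4 : ψ lx - ψ l₁ = 0 := by
          rcases mul_eq_zero.mp h3 with h | h
          · exact h
          · exact absurd h (mul_ne_zero hwne hvj)
        have hl : ψ l₁ = ψ lx := by linear_combination -h4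
        rw [hl]; ring
    -- upgrade: kill the second factor using injectivity of T
    have key2 : ∀ i : ι, (l₁ - lx) * M.inner (T x) (e i) = 0 := by
      intro i
      set b := (l₁ - lx) * M.inner (T x) (e i) with hb
      have hbT : b • T (e i₀) = 0 := by
        apply coords_zero
        intro j
        rw [M.inner_smul_left]
        exact key i j
      have hTb : T (b • e i₀) = T 0 := by rw [hT.2, hbT, hT0]
      have hbe : b • e i₀ = 0 := hTinj hTb
      have h5 : M.inner (b • e i₀) (e i₀) = 0 := by rw [hbe]; exact inner_zero_left _
      rwa [M.inner_smul_left, he.ortho_self, mul_one] at h5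
    have hfin : B x - l₁ • T x = 0 := by
      apply coords_zero
      intro i
      rw [inner_sub_left, hlx, M.inner_smul_left, M.inner_smul_left]
      linear_combination -key2 i
    exact sub_eq_zero.mp hfin
end

section
/- Let A be a unital C*-algebra and let E be a Hilbert C*-module over A possessing an orthonormal basis ε. If u, v ∈ CI and u = a·v for some a ∈ A, then a is invertible in A. -/
/-- if `u, v ∈ CI` and `u = a • v` for some `a ∈ A`, then `a` is
invertible in `A`. -/
theorem isUnit_of_CI_eq_smul_CI {A E ι : Type*} [CStarAlgebra A]
    [NormedAddCommGroup E] [Module A E]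
    (M : HilbertModule A E) (e : ι → E) (he : M.IsONB e)
    (u v : E) (hu : u ∈ M.CI e) (hv : v ∈ M.CI e)
    (a : A) (h : u = a • v) : IsUnit a := by
  obtain ⟨hu0, hui⟩ := hu
  obtain ⟨hv0, hvi⟩ := hv
  -- find a coordinate where u is nonzero
  have : ∃ i, M.inner (e i) u ≠ 0 := by
    by_contra hc
    push_neg at hc
    apply hu0
    have hz : ∀ i, M.inner u (e i) = 0 := fun i => by
      rw [M.inner_conj_symm, hc i, star_zero]
    have h1 := he.total u
    have h2 : HasSum (fun i => M.inner u (e i) • e i) (0 : E) := by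
      have : (fun i => M.inner u (e i) • e i) = fun _ => (0 : E) := by
        funext i; rw [hz i, zero_smul]
      rw [this]; exact hasSum_zero
    exact h1.unique h2
  obtain ⟨i, hi⟩ := this
  have hui' : IsUnit (M.inner (e i) u) := (hui i).resolve_left hi
  have key : M.inner (e i) u = M.inner (e i) v * star a := by
    rw [h, M.inner_conj_symm, M.inner_smul_left, star_mul, ← M.inner_conj_symm v (e i)]
  have hvi' : IsUnit (M.inner (e i) v) := by
    refine (hvi i).resolve_left fun h0 => hi ?_
    rw [key, h0, zero_mul]
  have : IsUnit (star a) := by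
    have := hvi'.unit⁻¹.isUnit.mul hui'
    rwa [key, ← mul_assoc, IsUnit.val_inv_mul, one_mul] at this
  simpa using this.star
end
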